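/- Let α > 1 and let v_0 = r, v_1, …, v_k be vertices of a connected graph G with non-negative edge weights such that for each i ≥ 1, α · d_G(r, v_i) < d_G(r, v_{i−1}) + D(v_{i−1}, v_i), where D(u,v) denotes the distance between u and v in a fixed spanning tree T_M. Then (α − 1) · Σ_{i=1}^{k} d_G(r, v_i) < Σ_{i=1}^{k} D(v_{i−1}, v_i). -/
import Mathlib


open SimpleGraph Finset

noncomputable def walkWeight {V : Type*} {G : SimpleGraph V} (w : Sym2 V → ℝ)
    {u v : V} (p : G.Walk u v) : ℝ :=
  (p.edges.map w).sum

noncomputable def wdist {V : Type*} (G : SimpleGraph V) (w : Sym2 V → ℝ) (u v : V) : ℝ :=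
  sInf {x | ∃ p : G.Walk u v, walkWeight w p = x}

open scoped Classical in
noncomputable def gweight {V : Type*} [Fintype V] (G : SimpleGraph V) (w : Sym2 V → ℝ) : ℝ :=
  ∑ e ∈ G.edgeSet.toFinset, w e

lemma walkWeight_nonneg {V : Type*} {G : SimpleGraph V} (w : Sym2 V → ℝ)
    (hw : ∀ e, 0 ≤ w e) {u v : V} (p : G.Walk u v) : 0 ≤ walkWeight w p := by
  unfold walkWeight
  apply List.sum_nonneg
  intro x hx
  obtain ⟨e, _, rfl⟩ := List.mem_map.1 hx
  exact hw e

lemma wdist_nonneg {V : Type*} (G : SimpleGraph V) (w : Sym2 V → ℝ)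
    (hw : ∀ e, 0 ≤ w e) (u v : V) : 0 ≤ wdist G w u v := by
  apply Real.sInf_nonneg
  rintro x ⟨p, rfl⟩
  exact walkWeight_nonneg w hw p

lemma wdist_self {V : Type*} (G : SimpleGraph V) (w : Sym2 V → ℝ)
    (hw : ∀ e, 0 ≤ w e) (u : V) : wdist G w u u = 0 := by
  apply le_antisymm
  · apply csInf_le
    · exact ⟨0, by rintro x ⟨p, rfl⟩; exact walkWeight_nonneg w hw p⟩
    · exact ⟨SimpleGraph.Walk.nil, rfl⟩
  · exact wdist_nonneg G w hw u u

/-- The key charging inequality of the LAST algorithm: if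
`α * d_G(r, v_i) < d_G(r, v_{i-1}) + D(v_{i-1}, v_i)` for `1 ≤ i ≤ k`, where `D` is the
distance in a fixed spanning tree `T_M`, then
`(α - 1) * Σ d_G(r, v_i) < Σ D(v_{i-1}, v_i)`. -/
theorem charging_inequality {V : Type*} (G : SimpleGraph V) (hG : G.Connected)
    (w : Sym2 V → ℝ) (hw : ∀ e, 0 ≤ w e)
    (TM : SimpleGraph V) (hTMle : TM ≤ G) (hTM : TM.IsTree)
    (α : ℝ) (hα : 1 < α) (r : V) (k : ℕ) (hk : 1 ≤ k)
    (v : ℕ → V) (hv0 : v 0 = r)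
    (hrel : ∀ i ∈ Finset.Icc 1 k,
      α * wdist G w r (v i) < wdist G w r (v (i - 1)) + wdist TM w (v (i - 1)) (v i)) :
    (α - 1) * ∑ i ∈ Finset.Icc 1 k, wdist G w r (v i)
      < ∑ i ∈ Finset.Icc 1 k, wdist TM w (v (i - 1)) (v i) := by
  set g : ℕ → ℝ := fun i => wdist G w r (v i) with hg
  have hne : (Finset.Icc 1 k).Nonempty := ⟨1, by simp [hk]⟩
  have hsum : ∑ i ∈ Finset.Icc 1 k, α * g i
      < ∑ i ∈ Finset.Icc 1 k, (g (i - 1) + wdist TM w (v (i - 1)) (v i)) :=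
    Finset.sum_lt_sum_of_nonempty hne hrel
  have hshift : ∑ i ∈ Finset.Icc 1 k, g (i - 1) ≤ ∑ i ∈ Finset.Icc 1 k, g i := by
    have h1 : ∑ i ∈ Finset.Icc 1 k, g (i - 1) = ∑ i ∈ Finset.range k, g i := by
      rw [← Finset.Ico_add_one_right_eq_Icc, Finset.sum_Ico_eq_sum_range]
      simp
    have h2 : ∑ i ∈ Finset.Icc 1 k, g i = ∑ i ∈ Finset.range k, g (i + 1) := by
      rw [← Finset.Ico_add_one_right_eq_Icc, Finset.sum_Ico_eq_sum_range]
      simp [Nat.add_comm]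
    have h3 : ∑ i ∈ Finset.range (k + 1), g i
        = ∑ i ∈ Finset.range k, g (i + 1) + g 0 := Finset.sum_range_succ' g k
    have h4 : ∑ i ∈ Finset.range (k + 1), g i
        = ∑ i ∈ Finset.range k, g i + g k := Finset.sum_range_succ g k
    have hg0 : g 0 = 0 := by simp [hg, hv0, wdist_self G w hw]
    have hgk : 0 ≤ g k := wdist_nonneg G w hw r (v k)
    rw [h1, h2]
    nlinarith [h3, h4]
  rw [← Finset.mul_sum] at hsum
  rw [Finset.sum_add_distrib] at hsum
  nlinarith [hsum, hshift]
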